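/- (Lemma 3.4, second part) Let Y : Fin d → Fin d → ℝ be curl-free and let W : Fin d → Fin d → ℝ be any skew-symmetric matrix. Then the Hadamard product W ∘ ReLU(Y) is the weighted adjacency matrix of a DAG: the edge relation E defined by E i j ↔ W i j * max (Y i j) 0 ≠ 0 is acyclic, i.e. there is no vertex i with Relation.TransGen E i i. -/

import Mathlib

/-!
A curl-free matrix is additive along paths, `Y i j + Y j k = Y i k`, so `0 < Y i j` is a
transitive and irreflexive relation, i.e. a strict order, which has no cycles. Every edge of
`W ∘ ReLU(Y)` is an edge of that order.
-/

def IsCurlFree {ι α : Type*} [Add α] [Zero α] (Y : ι → ι → α) : Prop :=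
  ∀ i j k, Y i j + Y j k + Y k i = 0

namespace IsCurlFree

variable {ι α : Type*} {Y : ι → ι → α}

section AddCommGroup

variable [AddCommGroup α] [IsAddTorsionFree α]

theorem apply_self (hY : IsCurlFree Y) (i : ι) : Y i i = 0 := by
  have h : (3 : ℕ) • Y i i = 0 := by rw [succ_nsmul, two_nsmul]; exact hY i i i
  exact (smul_eq_zero_iff_right three_ne_zero).1 h

theorem apply_swap (hY : IsCurlFree Y) (i j : ι) : Y j i = -Y i j := by
  have h := hY i j i
  rw [hY.apply_self, add_zero] at h
  exact eq_neg_of_add_eq_zero_right h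

theorem apply_add_apply (hY : IsCurlFree Y) (i j k : ι) : Y i j + Y j k = Y i k := by
  rw [← neg_neg (Y i k), ← hY.apply_swap, ← add_eq_zero_iff_eq_neg]
  exact hY i j k

end AddCommGroup

variable [AddCommGroup α] [LinearOrder α] [IsOrderedAddMonoid α]

theorem pos_of_transGen_pos (hY : IsCurlFree Y) {i j : ι}
    (h : Relation.TransGen (fun a b => 0 < Y a b) i j) : 0 < Y i j := by
  induction h with
  | single hab => exact hab
  | tail _ hbc hab => exact hY.apply_add_apply _ _ _ ▸ add_pos hab hbc

theorem not_transGen_pos_self (hY : IsCurlFree Y) (i : ι) :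
    ¬ Relation.TransGen (fun a b => 0 < Y a b) i i := fun h =>
  (hY.pos_of_transGen_pos h).ne' (hY.apply_self i)

end IsCurlFree

theorem pos_of_mul_max_zero_ne_zero {α : Type*} [MulZeroClass α] [LinearOrder α] {a b : α}
    (h : a * max b 0 ≠ 0) : 0 < b := by
  contrapose! h
  rw [max_eq_right h, mul_zero]

theorem hadamard_relu_curlFree_is_dag_general (d : ℕ)
    (Y W : Fin d → Fin d → ℝ)
    (hY : ∀ i j k : Fin d, Y i j + Y j k + Y k i = 0) :
    ¬ ∃ i : Fin d,
      Relation.TransGen (fun i j : Fin d => W i j * max (Y i j) 0 ≠ 0) i i := by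
  rintro ⟨i, hcycle⟩
  have hYpos : Relation.TransGen (fun a b => 0 < Y a b) i i :=
    Relation.TransGen.mono (fun _ _ => pos_of_mul_max_zero_ne_zero) _ _ hcycle
  exact IsCurlFree.not_transGen_pos_self hY i hYpos

/-- Lemma 3.4 (second part): if `Y` is curl-free and `W` is skew-symmetric,
the directed graph of the Hadamard product `W ∘ ReLU(Y)` is acyclic. -/
theorem hadamard_relu_curlFree_is_dag (d : ℕ) (hd : 1 ≤ d)
    (Y W : Fin d → Fin d → ℝ)
    (hY : ∀ i j k : Fin d, Y i j + Y j k + Y k i = 0)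
    (hW : ∀ i j : Fin d, W i j = -W j i) :
    ¬ ∃ i : Fin d,
      Relation.TransGen (fun i j : Fin d => W i j * max (Y i j) 0 ≠ 0) i i :=
  hadamard_relu_curlFree_is_dag_general d Y W hY
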